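/- arXiv:1802.07440 — 2 statements merged into one kernel-verified Lean document; each statement's English description precedes it below -/
import Mathlib

section
/- Let G = (V,E) be a graph with strict preference lists and let G' be the associated bidirected instance. If G admits a strongly dominant matching, then G' admits a stable matching. -/
open scoped Classical

/-- A roommates instance: a (finite) graph `(V, adj)` together with a raw preference
relation: `pref u v w` means vertex `u` strictly prefers its neighbor `v` to its
neighbor `w`. -/
structure RoommatesInstance (V : Type) where
  adj : V → V → Prop
  adj_symm : ∀ u v, adj u v → adj v u
  adj_irrefl : ∀ u, ¬ adj u u
  pref : V → V → V → Prop

namespace RoommatesInstance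

variable {V : Type}

/-- The preference relation of each vertex is a strict linear order on its neighbors. -/
def StrictPrefs (G : RoommatesInstance V) : Prop :=
  (∀ u v w, G.pref u v w → G.adj u v ∧ G.adj u w) ∧
  (∀ u v w x, G.pref u v w → G.pref u w x → G.pref u v x) ∧
  (∀ u v w, G.pref u v w → ¬ G.pref u w v) ∧
  (∀ u v w, G.adj u v → G.adj u w → v ≠ w → G.pref u v w ∨ G.pref u w v)

/-- A matching, encoded by the partner function of the corresponding perfect matching
`M̃` of `G̃` (the graph `G` with a self-loop added at every vertex): `m u = u` means
that `u` is unmatched in `M`, i.e. matched to itself along its self-loop in `M̃`. -/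
structure Matching (G : RoommatesInstance V) where
  m : V → V
  invol : ∀ u, m (m u) = u
  adj_of_ne : ∀ u, m u ≠ u → G.adj u (m u)

variable (G : RoommatesInstance V)

/-- `u` considers `v` strictly better than `w`, where each of `v`, `w` is either a
neighbor of `u` or `u` itself (`u` itself stands for being unmatched, which every
vertex ranks below all of its neighbors). -/
def Better (u v w : V) : Prop :=
  (w = u ∧ v ≠ u) ∨ (v ≠ u ∧ w ≠ u ∧ G.pref u v w)

/-- vertex `u` prefers matching `M` to matching `M'` -/
def Prefers (M M' : G.Matching) (u : V) : Prop :=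
  G.Better u (M.m u) (M'.m u)

/-- `φ(M,M')`: the number of vertices preferring `M` to `M'` -/
noncomputable def phi [Fintype V] (M M' : G.Matching) : ℕ :=
  (Finset.univ.filter fun u => G.Prefers M M' u).card

/-- `Δ(M,M') = φ(M,M') - φ(M',M)` -/
noncomputable def delta [Fintype V] (M M' : G.Matching) : ℤ :=
  (G.phi M M' : ℤ) - (G.phi M' M : ℤ)

/-- a matching `M` is popular if it never loses a head-to-head election -/
def Popular [Fintype V] (M : G.Matching) : Prop :=
  ∀ M' : G.Matching, 0 ≤ G.delta M M'

/-- `(u,v)` is a blocking edge to `M`: both endpoints prefer each other to their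
assignments in `M̃`. -/
def Blocks (M : G.Matching) (u v : V) : Prop :=
  G.adj u v ∧ G.Better u v (M.m u) ∧ G.Better v u (M.m v)

/-- `(u,v)` is a negative edge to `M`: both endpoints prefer their assignments in `M̃`
to each other. -/
def Negative (M : G.Matching) (u v : V) : Prop :=
  G.adj u v ∧ G.Better u (M.m u) v ∧ G.Better v (M.m v) u

/-- `cost_M` on the edges of `G̃`: `cost_M(u,v) = 2` for a blocking edge, `-2` for a
negative edge, `0` otherwise; `cost_M(u,u) = 0` if `u` is unmatched in `M` and `-1`
otherwise. -/
noncomputable def cost (M : G.Matching) (u v : V) : ℤ :=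
  if u = v then (if M.m u = u then 0 else -1)
  else if G.Blocks M u v then 2
  else if G.Negative M u v then -2
  else 0

/-- a stable matching: no blocking edge -/
def Stable (M : G.Matching) : Prop := ∀ u v, ¬ G.Blocks M u v

/-- the number of edges of a matching -/
noncomputable def msize [Fintype V] (M : G.Matching) : ℕ :=
  (Finset.univ.filter fun u => M.m u ≠ u).card / 2

theorem cost_comm (M : G.Matching) (u v : V) : G.cost M u v = G.cost M v u := by
  unfold cost
  rcases eq_or_ne u v with rfl | huv
  · rfl
  · rw [if_neg huv, if_neg (Ne.symm huv)]
    have hb : G.Blocks M u v ↔ G.Blocks M v u :=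
      ⟨fun ⟨h1, h2, h3⟩ => ⟨G.adj_symm _ _ h1, h3, h2⟩,
       fun ⟨h1, h2, h3⟩ => ⟨G.adj_symm _ _ h1, h3, h2⟩⟩
    have hn : G.Negative M u v ↔ G.Negative M v u :=
      ⟨fun ⟨h1, h2, h3⟩ => ⟨G.adj_symm _ _ h1, h3, h2⟩,
       fun ⟨h1, h2, h3⟩ => ⟨G.adj_symm _ _ h1, h3, h2⟩⟩
    simp only [hb, hn]

end RoommatesInstance

namespace RoommatesInstance

variable {V : Type} (G : RoommatesInstance V)

/-- `M` is strongly dominant: there is a partition `(L,R)` of `V` such that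
`M ⊆ L × R`, `M` matches all of `R`, every blocking edge to `M` lies in `R × R`,
and every edge of `G` inside `L × L` is negative to `M`. -/
def StronglyDominant (M : G.Matching) : Prop :=
  ∃ L R : Set V,
    (∀ v, (v ∈ L ∨ v ∈ R) ∧ ¬ (v ∈ L ∧ v ∈ R)) ∧
    (∀ u, M.m u ≠ u → (u ∈ L ↔ M.m u ∈ R)) ∧
    (∀ u ∈ R, M.m u ≠ u) ∧
    (∀ u v, G.Blocks M u v → u ∈ R ∧ v ∈ R) ∧
    (∀ u v, G.adj u v → u ∈ L → v ∈ L → G.Negative M u v)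

end RoommatesInstance

namespace RoommatesInstance

variable {V : Type} (G : RoommatesInstance V)

/-- A matching `M'` in the bidirected instance `G'` associated with `G`.  `G'` has the
same vertex set as `G` and, for each edge `(u,v)` of `G`, the two parallel edges
`(u⁺,v⁻)` and `(u⁻,v⁺)`.  We record, for each vertex `u`, its partner together with
the sign of the copy of the partner that `u` is matched to: `p u = some (v, s)` means
that `u` is matched to `v^s` (`s = true` is `+`, `s = false` is `-`), i.e. the edge
`(u^{¬s}, v^s)` of `G'` is in `M'`. -/
structure BidirMatching where
  p : V → Option (V × Bool)
  mem_adj : ∀ u v s, p u = some (v, s) → G.adj u v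
  consistent : ∀ u v s, p u = some (v, s) → p v = some (u, !s)

/-- The edge `(u⁺,v⁻)` belongs to `M'` iff `u` is matched to `v⁻`. -/
def BidirMatching.hasEdge {G : RoommatesInstance V} (M' : G.BidirMatching) (u v : V) : Prop :=
  M'.p u = some (v, false)

/-- In `G'`, if `u`'s preference list in `G` is `v_1 ≻ ⋯ ≻ v_k`, then `u`'s list in
`G'` is `v_1⁻ ≻ ⋯ ≻ v_k⁻ ≻ v_1⁺ ≻ ⋯ ≻ v_k⁺`.  `M'` is stable in `G'` if for every
edge `(u⁺,v⁻) ∉ M'`, either `u` is matched to a neighbor it ranks better than `v⁻`,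
or `v` is matched to a neighbor it ranks better than `u⁺`. -/
def BidirStable (M' : G.BidirMatching) : Prop :=
  ∀ u v, G.adj u v → ¬ M'.hasEdge u v →
    (∃ w, M'.p u = some (w, false) ∧ G.pref u w v) ∨
    (∃ w t, M'.p v = some (w, t) ∧ (t = false ∨ (t = true ∧ G.pref v w u)))

/-- `M` is the projection of `M'`: `M = {(u,v) : (u⁺,v⁻) ∈ M' or (u⁻,v⁺) ∈ M'}`. -/
def IsProjection (M' : G.BidirMatching) (M : G.Matching) : Prop :=
  ∀ u, M.m u = ((M'.p u).map Prod.fst).getD u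

end RoommatesInstance

/-! Orient the strongly dominant matching `M` with partition `(L, R)`: every vertex of `R`
is matched to the minus copy of its partner, every matched vertex of `L` to the plus copy.
Vertices of `R` then never block in `G'`. For an edge `(u⁺, v⁻)` with `v ∈ L`, either `v`
prefers its plus partner to `u⁺`, or `v` prefers `u` to `M(v)`; then `u ∈ L` is impossible
since edges inside `L` are negative, and for `u ∈ R` a partner of `u` worse than `v` would
make `(u, v)` a blocking edge leaving `R × R`. -/

namespace RoommatesInstance

variable {V : Type} {G : RoommatesInstance V}

theorem StrictPrefs.better_asymm (hG : G.StrictPrefs) {u v w : V} (h : G.Better u v w) :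
    ¬ G.Better u w v := by
  have := hG.2.2.1 u v w
  unfold Better at h ⊢
  tauto

theorem StrictPrefs.pref_partner_or_better (hG : G.StrictPrefs) (M : G.Matching) {u v : V}
    (hadj : G.adj u v) (hv : v ≠ M.m u) :
    (M.m u ≠ u ∧ G.pref u (M.m u) v) ∨ G.Better u v (M.m u) := by
  have hvu : v ≠ u := by rintro rfl; exact G.adj_irrefl v hadj
  by_cases hm : M.m u = u
  · exact Or.inr (Or.inl ⟨hm, hvu⟩)
  · rcases hG.2.2.2 u v (M.m u) hadj (M.adj_of_ne u hm) hv with hp | hp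
    exacts [Or.inr (Or.inr ⟨hvu, hm, hp⟩), Or.inl ⟨hm, hp⟩]

noncomputable def Matching.orient (M : G.Matching) (R : Set V)
    (hR : ∀ u, M.m u ≠ u → (u ∉ R ↔ M.m u ∈ R)) : G.BidirMatching where
  p u := if M.m u = u then none else some (M.m u, decide (u ∉ R))
  mem_adj u v s hp := by
    split_ifs at hp with hm
    obtain ⟨rfl, -⟩ := Prod.mk.inj (Option.some.inj hp)
    exact M.adj_of_ne u hm
  consistent u v s hp := by
    split_ifs at hp with hm
    obtain ⟨rfl, rfl⟩ := Prod.mk.inj (Option.some.inj hp)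
    have hmm : M.m (M.m u) ≠ M.m u := by rw [M.invol]; exact Ne.symm hm
    rw [if_neg hmm, M.invol]
    by_cases h : M.m u ∈ R <;> simp [h, hR u hm]

theorem Matching.orient_p (M : G.Matching) (R : Set V)
    (hR : ∀ u, M.m u ≠ u → (u ∉ R ↔ M.m u ∈ R)) {u : V} (hu : M.m u ≠ u) :
    (M.orient R hR).p u = some (M.m u, decide (u ∉ R)) :=
  if_neg hu

theorem Matching.bidirStable_orient (hG : G.StrictPrefs) (M : G.Matching) (R : Set V)
    (hR : ∀ u, M.m u ≠ u → (u ∉ R ↔ M.m u ∈ R))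
    (hRm : ∀ u ∈ R, M.m u ≠ u)
    (hblock : ∀ u v, G.Blocks M u v → u ∈ R ∧ v ∈ R)
    (hneg : ∀ u v, G.adj u v → u ∉ R → v ∉ R → G.Negative M u v) :
    G.BidirStable (M.orient R hR) := by
  intro u v hadj hnot
  by_cases hvR : v ∈ R
  · exact Or.inr ⟨M.m v, false, by simp [M.orient_p R hR (hRm v hvR), hvR], Or.inl rfl⟩
  have hu : u ≠ M.m v := by
    intro hu
    have hmu : M.m u = v := by rw [hu, M.invol]
    have hum : M.m u ≠ u := by rw [hmu]; exact fun h => G.adj_irrefl u (h ▸ hadj)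
    have huR : u ∈ R := by_contra fun huR => hvR (hmu ▸ (hR u hum).1 huR)
    exact hnot (by simp [BidirMatching.hasEdge, M.orient_p R hR hum, hmu, huR])
  rcases hG.pref_partner_or_better M (G.adj_symm u v hadj) hu with ⟨hvm, hp⟩ | hvu
  · exact Or.inr ⟨M.m v, true, by simp [M.orient_p R hR hvm, hvR], Or.inr ⟨rfl, hp⟩⟩
  by_cases huR : u ∉ R
  · exact absurd (hneg u v hadj huR hvR).2.2 (hG.better_asymm hvu)
  have hv : v ≠ M.m u := by
    rintro rfl
    rw [M.invol] at hvu
    exact hG.better_asymm hvu hvu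
  rcases hG.pref_partner_or_better M hadj hv with ⟨hum, hp⟩ | huv
  · exact Or.inl ⟨M.m u, by simp [M.orient_p R hR hum, huR], hp⟩
  · exact absurd (hblock u v ⟨hadj, huv, hvu⟩).2 hvR

end RoommatesInstance

open RoommatesInstance in
theorem bidirStable_of_stronglyDominant_general {V : Type}
    (G : RoommatesInstance V) (hG : G.StrictPrefs)
    (h : ∃ M : G.Matching, G.StronglyDominant M) :
    ∃ M' : G.BidirMatching, G.BidirStable M' := by
  obtain ⟨M, L, R, hpart, hLR, hRm, hblock, hneg⟩ := h
  have hL : ∀ v, v ∈ L ↔ v ∉ R := fun v => by have := hpart v; tauto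
  simp only [hL] at hLR hneg
  exact ⟨M.orient R hLR, M.bidirStable_orient hG R hLR hRm hblock hneg⟩

open RoommatesInstance in
/-- If `G` admits a strongly dominant matching, then the bidirected
instance `G'` admits a stable matching. -/
theorem bidirStable_of_stronglyDominant {V : Type} [Fintype V]
    (G : RoommatesInstance V) (hG : G.StrictPrefs)
    (h : ∃ M : G.Matching, G.StronglyDominant M) :
    ∃ M' : G.BidirMatching, G.BidirStable M' :=
  bidirStable_of_stronglyDominant_general G hG h
end

section
/- Let G = (V,E) be a graph with strict preference lists and let G' be the associated bidirected instance. Then G admits a strongly dominant matching if and only if G' admits a stable matching. -/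
open scoped Classical

/-!
A stable matching `M'` of `G'` projects to a matching `M` of `G`. Put in `R` the vertices that
`M'` matches to a `⁻`-copy and in `L` all others. Stability of `M'` at the edge `(b⁺, a⁻)` forces a
blocking edge `(a, b)` of `M` to have `a ∈ R`, and at `(a⁺, b⁻)` it forces an edge inside `L` to be
negative. Conversely, given a strongly dominant `M` with partition `(L, R)`, match each vertex of
`L` to the `⁺`-copy and each vertex of `R` to the `⁻`-copy of its partner; an edge `(a⁺, b⁻)` that
would destabilise this matching is either negative inside `L` or a blocking edge leaving `R`.
-/

namespace RoommatesInstance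

variable {V : Type} {G : RoommatesInstance V}

lemma ne_of_adj {u v : V} (h : G.adj u v) : u ≠ v :=
  fun huv => G.adj_irrefl u (huv ▸ h)

namespace Better

lemma ne_left {u v w : V} (h : G.Better u v w) : v ≠ u := by
  rcases h with ⟨-, h⟩ | ⟨h, -⟩ <;> exact h

lemma pref {u v w : V} (h : G.Better u v w) (hw : w ≠ u) : G.pref u v w := by
  rcases h with ⟨h, -⟩ | ⟨-, -, h⟩
  · exact absurd h hw
  · exact h

lemma asymm (hG : G.StrictPrefs) {u v w : V} (h : G.Better u v w) : ¬ G.Better u w v := by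
  rintro (⟨rfl, -⟩ | ⟨hw, -, h'⟩)
  · exact h.ne_left rfl
  · exact hG.2.2.1 _ _ _ (h.pref hw) h'

end Better

lemma better_of_pref (hG : G.StrictPrefs) {u v w : V} (h : G.pref u v w) : G.Better u v w :=
  Or.inr ⟨(ne_of_adj (hG.1 _ _ _ h).1).symm, (ne_of_adj (hG.1 _ _ _ h).2).symm, h⟩

lemma better_or_better (hG : G.StrictPrefs) {u v w : V} (hv : v = u ∨ G.adj u v)
    (hw : G.adj u w) (hvw : v ≠ w) : G.Better u v w ∨ G.Better u w v := by
  rcases hv with rfl | hv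
  · exact Or.inr (Or.inl ⟨rfl, (ne_of_adj hw).symm⟩)
  · exact (hG.2.2.2 u v w hv hw hvw).imp (better_of_pref hG) (better_of_pref hG)

lemma Blocks.symm {M : G.Matching} {u v : V} (h : G.Blocks M u v) : G.Blocks M v u :=
  ⟨G.adj_symm _ _ h.1, h.2.2, h.2.1⟩

lemma Matching.eq_or_adj (M : G.Matching) (u : V) : M.m u = u ∨ G.adj u (M.m u) :=
  (em _).imp_right (M.adj_of_ne u)

/-- `R` is the right side of a partition `(Rᶜ, R)` witnessing that `M` is strongly dominant. -/
structure IsDominancePartition (M : G.Matching) (R : Set V) : Prop where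
  partner_mem_iff : ∀ u, M.m u ≠ u → (M.m u ∈ R ↔ u ∉ R)
  matched : ∀ u ∈ R, M.m u ≠ u
  mem_of_blocks : ∀ u v, G.Blocks M u v → u ∈ R
  negative : ∀ u v, G.adj u v → u ∉ R → v ∉ R → G.Negative M u v

lemma stronglyDominant_iff {M : G.Matching} :
    G.StronglyDominant M ↔ ∃ R, IsDominancePartition M R := by
  constructor
  · rintro ⟨L, R, hpart, hLR, hRm, hblocks, hneg⟩
    have hL : ∀ v, v ∈ L ↔ v ∉ R := fun v => by have := hpart v; tauto
    refine ⟨R, fun u hu => ?_, hRm, fun u v h => (hblocks u v h).1,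
      fun u v h hu hv => hneg u v h ((hL u).2 hu) ((hL v).2 hv)⟩
    rw [← hL]
    exact (hLR u hu).symm
  · rintro ⟨R, hR⟩
    refine ⟨Rᶜ, R, fun v => ?_, fun u hu => (hR.partner_mem_iff u hu).symm, hR.matched,
      fun u v h => ⟨hR.mem_of_blocks u v h, hR.mem_of_blocks v u h.symm⟩, hR.negative⟩
    by_cases hv : v ∈ R <;> simp [hv]

noncomputable def Matching.toBidir (M : G.Matching) (R : Set V)
    (hR : ∀ u, M.m u ≠ u → (M.m u ∈ R ↔ u ∉ R)) : G.BidirMatching where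
  p u := if M.m u = u then none else some (M.m u, decide (u ∉ R))
  mem_adj u v s h := by
    split_ifs at h with hu
    obtain ⟨rfl, -⟩ := Prod.mk.inj (Option.some.inj h)
    exact M.adj_of_ne u hu
  consistent u v s h := by
    split_ifs at h with hu
    obtain ⟨rfl, rfl⟩ := Prod.mk.inj (Option.some.inj h)
    have hv : M.m (M.m u) ≠ M.m u := by rw [M.invol]; exact Ne.symm hu
    rw [if_neg hv, M.invol]
    simp [hR u hu]

section toBidir

variable {M : G.Matching} {R : Set V} {hR : ∀ u, M.m u ≠ u → (M.m u ∈ R ↔ u ∉ R)}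

lemma Matching.toBidir_p_of_ne {u : V} (hu : M.m u ≠ u) :
    (M.toBidir R hR).p u = some (M.m u, decide (u ∉ R)) :=
  if_neg hu

lemma Matching.toBidir_hasEdge {a b : V} (h : M.m a = b) (hba : b ≠ a) (ha : a ∈ R) :
    (M.toBidir R hR).hasEdge a b := by
  rw [BidirMatching.hasEdge, toBidir_p_of_ne (h ▸ hba)]
  simp [h, ha]

end toBidir

lemma bidirStable_toBidir (hG : G.StrictPrefs) {M : G.Matching} {R : Set V}
    (hR : IsDominancePartition M R) : G.BidirStable (M.toBidir R hR.partner_mem_iff) := by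
  intro a b hab hne
  by_cases hbR : b ∈ R
  · exact Or.inr ⟨M.m b, false, by rw [Matching.toBidir_p_of_ne (hR.matched b hbR)]; simp [hbR],
      Or.inl rfl⟩
  by_cases hb : G.Better b (M.m b) a
  · exact Or.inr ⟨M.m b, true, by rw [Matching.toBidir_p_of_ne hb.ne_left]; simp [hbR],
      Or.inr ⟨rfl, hb.pref (ne_of_adj hab)⟩⟩
  have hmba : M.m b ≠ a := by
    rintro rfl
    have hmb : M.m b ≠ b := ne_of_adj hab
    exact hne (Matching.toBidir_hasEdge (M.invol b) hmb.symm
      ((hR.partner_mem_iff b hmb).2 hbR))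
  have hba : G.Better b a (M.m b) :=
    (better_or_better hG (M.eq_or_adj b) (G.adj_symm _ _ hab) hmba).resolve_left hb
  have haR : a ∈ R := by
    by_contra haR
    exact hba.asymm hG (hR.negative a b hab haR hbR).2.2
  have ham : M.m a ≠ a := hR.matched a haR
  have hmab : M.m a ≠ b := fun h => hne (Matching.toBidir_hasEdge h (ne_of_adj hab).symm haR)
  have ha : G.Better a (M.m a) b :=
    (better_or_better hG (Or.inr (M.adj_of_ne a ham)) hab hmab).resolve_right
      fun h => hbR (hR.mem_of_blocks b a ⟨G.adj_symm _ _ hab, hba, h⟩)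
  exact Or.inl ⟨M.m a, by rw [Matching.toBidir_p_of_ne ham]; simp [haR],
    ha.pref (ne_of_adj hab).symm⟩

namespace BidirMatching

variable {M' : G.BidirMatching}

lemma ne_of_p_eq {u v : V} {s : Bool} (h : M'.p u = some (v, s)) : v ≠ u :=
  (ne_of_adj (M'.mem_adj u v s h)).symm

def toMatching (M' : G.BidirMatching) : G.Matching where
  m u := ((M'.p u).map Prod.fst).getD u
  invol u := by
    rcases hp : M'.p u with _ | ⟨v, s⟩
    · simp [hp]
    · simp [M'.consistent u v s hp]
  adj_of_ne u hu := by
    rcases hp : M'.p u with _ | ⟨v, s⟩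
    · simp [hp] at hu
    · simpa [hp] using M'.mem_adj u v s hp

lemma toMatching_m_of_p_eq {u v : V} {s : Bool} (h : M'.p u = some (v, s)) :
    M'.toMatching.m u = v := by
  simp [toMatching, h]

lemma toMatching_m_of_p_eq_none {u : V} (h : M'.p u = none) : M'.toMatching.m u = u := by
  simp [toMatching, h]

def minusMatched (M' : G.BidirMatching) : Set V := {u | ∃ v, M'.p u = some (v, false)}

lemma mem_minusMatched_iff {u v : V} {s : Bool} (h : M'.p u = some (v, s)) :
    u ∈ M'.minusMatched ↔ s = false := by
  simp [minusMatched, h]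

variable (hG : G.StrictPrefs) (hst : G.BidirStable M')
include hG hst

lemma mem_minusMatched_of_blocks {a b : V} (h : G.Blocks M'.toMatching a b) :
    a ∈ M'.minusMatched := by
  obtain ⟨hab, ha, hb⟩ := h
  have hne : ¬ M'.hasEdge b a := fun h => by
    rw [toMatching_m_of_p_eq h] at hb
    exact hb.asymm hG hb
  rcases hst b a (G.adj_symm _ _ hab) hne with ⟨w, hw, hpref⟩ | ⟨w, t, hw, rfl | ⟨rfl, hpref⟩⟩
  · rw [toMatching_m_of_p_eq hw] at hb
    exact absurd (better_of_pref hG hpref) (hb.asymm hG)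
  · exact ⟨w, hw⟩
  · rw [toMatching_m_of_p_eq hw] at ha
    exact absurd (better_of_pref hG hpref) (ha.asymm hG)

lemma better_of_not_mem_minusMatched {a b : V} (hab : G.adj a b) (ha : a ∉ M'.minusMatched)
    (hb : b ∉ M'.minusMatched) : G.Better b (M'.toMatching.m b) a := by
  rcases hst a b hab fun h => ha ⟨b, h⟩ with ⟨w, hw, -⟩ | ⟨w, t, hw, rfl | ⟨rfl, hpref⟩⟩
  · exact absurd ⟨w, hw⟩ ha
  · exact absurd ⟨w, hw⟩ hb
  · rw [toMatching_m_of_p_eq hw]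
    exact better_of_pref hG hpref

lemma isDominancePartition_minusMatched :
    IsDominancePartition M'.toMatching M'.minusMatched where
  partner_mem_iff u hu := by
    rcases hp : M'.p u with _ | ⟨v, s⟩
    · exact absurd (toMatching_m_of_p_eq_none hp) hu
    · rw [toMatching_m_of_p_eq hp, mem_minusMatched_iff (M'.consistent u v s hp),
        mem_minusMatched_iff hp]
      cases s <;> simp
  matched u := fun ⟨v, hv⟩ => by
    rw [toMatching_m_of_p_eq hv]
    exact ne_of_p_eq hv
  mem_of_blocks _ _ h := mem_minusMatched_of_blocks hG hst h
  negative u v h hu hv := ⟨h, better_of_not_mem_minusMatched hG hst (G.adj_symm _ _ h) hv hu,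
    better_of_not_mem_minusMatched hG hst h hu hv⟩

end BidirMatching

end RoommatesInstance

open RoommatesInstance in
theorem stronglyDominant_iff_bidirStable_general {V : Type}
    (G : RoommatesInstance V) (hG : G.StrictPrefs) :
    (∃ M : G.Matching, G.StronglyDominant M) ↔
      ∃ M' : G.BidirMatching, G.BidirStable M' := by
  constructor
  · rintro ⟨M, hM⟩
    obtain ⟨R, hR⟩ := stronglyDominant_iff.mp hM
    exact ⟨_, bidirStable_toBidir hG hR⟩
  · rintro ⟨M', hst⟩
    exact ⟨M'.toMatching,
      stronglyDominant_iff.mpr ⟨_, BidirMatching.isDominancePartition_minusMatched hG hst⟩⟩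

open RoommatesInstance in
/-- `G` admits a strongly dominant matching iff the bidirected
instance `G'` admits a stable matching. -/
theorem stronglyDominant_iff_bidirStable {V : Type} [Fintype V]
    (G : RoommatesInstance V) (hG : G.StrictPrefs) :
    (∃ M : G.Matching, G.StronglyDominant M) ↔
      ∃ M' : G.BidirMatching, G.BidirStable M' :=
  stronglyDominant_iff_bidirStable_general G hG
end
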